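/- Fix $\alpha \in (0,1)$ and for each $\lambda \in (0,1)$ let $f_{\lambda,\alpha}(x) = \max(x-\lambda, 0)^\alpha$ on $[0,1]$. Then the family $\{f_{\lambda,\alpha} : \lambda \in (0,1)\}$ is linearly independent, and every nonzero finite linear combination $\sum_{i=1}^n a_i f_{\lambda_i,\alpha}$ (with distinct $\lambda_i$ and all $a_i \ne 0$) fails to be $\beta$-Hölder for every $\beta > \alpha$. -/

import Mathlib

/-!
Let `g = ∑ c_j (x - μ_j)₊ ^ α` with some `c_j ≠ 0`, and let `μ_i` be the smallest breakpoint
carrying a nonzero coefficient. Every other term vanishes on `[μ_i, μ_i + δ]` for small `δ`, so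
`g (μ_i + t) - g μ_i = c_i t ^ α` for small `t ≥ 0`. A `β`-Hölder bound would give
`|c_i| t ^ α ≤ C t ^ β`, impossible as `t → 0⁺` when `β > α`. The zero function is Hölder,
so this also yields linear independence.
-/

open Filter Topology Set

lemma not_eventually_abs_mul_rpow_le {c C α β : ℝ} (hc : c ≠ 0) (hαβ : α < β) :
    ¬ ∀ᶠ t in 𝓝[>] 0, |c| * t ^ α ≤ C * t ^ β := by
  intro hev
  have hγ : 0 < β - α := sub_pos.2 hαβ
  have hsmall : ∀ᶠ t in 𝓝[>] 0, C * t ^ (β - α) < |c| := by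
    have hlim : Tendsto (fun t : ℝ => C * t ^ (β - α)) (𝓝 0) (𝓝 0) := by
      simpa [Real.zero_rpow hγ.ne'] using
        ((Real.continuousAt_rpow_const 0 (β - α) (Or.inr hγ.le)).const_mul C).tendsto
    exact nhdsWithin_le_nhds (hlim.eventually (eventually_lt_nhds (abs_pos.2 hc)))
  obtain ⟨t, hle, hlt, ht⟩ := (hev.and (hsmall.and self_mem_nhdsWithin)).exists
  have hsplit : t ^ β = t ^ (β - α) * t ^ α := by
    rw [← Real.rpow_add ht]; ring_nf
  have hbound := mul_lt_mul_of_pos_right hlt (Real.rpow_pos_of_pos ht α)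
  rw [hsplit, ← mul_assoc] at hle
  linarith

lemma eventually_sum_mul_max_sub_rpow_eq {ι : Type*} {α : ℝ} (hα : α ≠ 0) {s : Finset ι}
    (c μ : ι → ℝ) (hμ : InjOn μ s) (hc : ∃ i ∈ s, c i ≠ 0) :
    ∃ i ∈ s, c i ≠ 0 ∧ ∀ᶠ t in 𝓝[≥] 0,
      ∑ j ∈ s, c j * max (μ i + t - μ j) 0 ^ α = c i * t ^ α := by
  classical
  set T := s.filter (c · ≠ 0)
  obtain ⟨i, hiT, hmin⟩ := T.exists_min_image μ (by simpa [T, Finset.Nonempty] using hc)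
  obtain ⟨hi, hci⟩ := Finset.mem_filter.1 hiT
  refine ⟨i, hi, hci, ?_⟩
  have hgap : ∀ᶠ t in 𝓝[≥] 0, ∀ j ∈ T.erase i, t < μ j - μ i := by
    refine (Finset.eventually_all _).2 fun j hj => nhdsWithin_le_nhds (eventually_lt_nhds ?_)
    obtain ⟨hji, hjT⟩ := Finset.mem_erase.1 hj
    have hjs := (Finset.mem_filter.1 hjT).1
    exact sub_pos.2 ((hmin j hjT).lt_of_ne fun h => hji (hμ hjs hi h.symm))
  filter_upwards [hgap, self_mem_nhdsWithin] with t hgapt (ht : 0 ≤ t)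
  rw [Finset.sum_eq_single_of_mem i hi]
  · rw [add_sub_cancel_left, max_eq_left ht]
  · intro j hj hji
    by_cases hcj : c j = 0
    · rw [hcj, zero_mul]
    · have hjT : j ∈ T.erase i := Finset.mem_erase.2 ⟨hji, Finset.mem_filter.2 ⟨hj, hcj⟩⟩
      have hneg : μ i + t - μ j ≤ 0 := by linarith [hgapt j hjT]
      rw [max_eq_right hneg, Real.zero_rpow hα, mul_zero]

lemma not_holder_sum_mul_max_sub_rpow {ι : Type*} {α β : ℝ} (hα : 0 < α) (hαβ : α < β)
    {s : Finset ι} (c μ : ι → ℝ) (hμI : ∀ i ∈ s, μ i ∈ Ico (0 : ℝ) 1) (hμ : InjOn μ s)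
    (hc : ∃ i ∈ s, c i ≠ 0) :
    ¬ ∃ C : ℝ, ∀ x ∈ Icc (0 : ℝ) 1, ∀ y ∈ Icc (0 : ℝ) 1,
      |∑ j ∈ s, c j * max (x - μ j) 0 ^ α - ∑ j ∈ s, c j * max (y - μ j) 0 ^ α|
        ≤ C * |x - y| ^ β := by
  rintro ⟨C, hC⟩
  obtain ⟨i, hi, hci, hev⟩ := eventually_sum_mul_max_sub_rpow_eq hα.ne' c μ hμ hc
  obtain ⟨hμ0, hμ1⟩ := hμI i hi
  have hbase : ∑ j ∈ s, c j * max (μ i - μ j) 0 ^ α = 0 := by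
    simpa [Real.zero_rpow hα.ne'] using hev.self_of_nhdsWithin (le_refl (0 : ℝ))
  apply not_eventually_abs_mul_rpow_le (C := C) hci hαβ
  have hsmall : ∀ᶠ t in 𝓝[>] (0 : ℝ), t < 1 - μ i :=
    nhdsWithin_le_nhds (eventually_lt_nhds (sub_pos.2 hμ1))
  filter_upwards [nhdsWithin_mono _ Ioi_subset_Ici_self hev, hsmall, self_mem_nhdsWithin]
    with t hvalue ht1 (ht : 0 < t)
  have hholder := hC (μ i + t) ⟨by linarith, by linarith⟩ (μ i) ⟨hμ0, hμ1.le⟩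
  rwa [hvalue, hbase, sub_zero, add_sub_cancel_left, abs_mul, abs_of_pos ht,
    abs_of_pos (Real.rpow_pos_of_pos ht α)] at hholder

/-- For fixed `α ∈ (0,1)`, the family `f_λ(x) = max(x-λ,0)^α` (`λ ∈ (0,1)`),
viewed as functions on `[0,1]`, is linearly independent, and every nontrivial
finite linear combination fails to be `β`-Hölder for every `β > α`. -/
theorem stmt12 (α : ℝ) (hα : α ∈ Set.Ioo (0:ℝ) 1)
    (F : Set.Ioo (0:ℝ) 1 → (Set.Icc (0:ℝ) 1 → ℝ))
    (hF : ∀ lam x, F lam x = max ((x : ℝ) - (lam : ℝ)) 0 ^ α) :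
    LinearIndependent ℝ F ∧
    ∀ (n : ℕ), 0 < n → ∀ (a : Fin n → ℝ) (lam : Fin n → Set.Ioo (0:ℝ) 1),
      Function.Injective lam → (∀ i, a i ≠ 0) →
      ∀ β : ℝ, α < β →
        ¬ ∃ C : ℝ, ∀ x y : Set.Icc (0:ℝ) 1,
          |(∑ i, a i • F (lam i)) x - (∑ i, a i • F (lam i)) y| ≤
            C * |(x : ℝ) - (y : ℝ)| ^ β := by
  refine ⟨linearIndependent_iff'.2 fun s g hsum i hi => ?_, ?_⟩
  · by_contra hgi
    refine not_holder_sum_mul_max_sub_rpow (β := α + 1) hα.1 (by linarith) g (↑)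
      (fun j _ => Ioo_subset_Ico_self j.2) Subtype.val_injective.injOn ⟨i, hi, hgi⟩
      ⟨0, fun x hx y hy => ?_⟩
    have hzero : ∀ z ∈ Icc (0 : ℝ) 1, ∑ j ∈ s, g j * max (z - j) 0 ^ α = 0 := fun z hz => by
      simpa [Finset.sum_apply, hF] using congrFun hsum ⟨z, hz⟩
    simp [hzero x hx, hzero y hy]
  · rintro n hn a lam hlam ha β hαβ ⟨C, hC⟩
    refine not_holder_sum_mul_max_sub_rpow hα.1 hαβ a (fun i => lam i)
      (fun i _ => Ioo_subset_Ico_self (lam i).2) (Subtype.val_injective.comp hlam).injOn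
      ⟨⟨0, hn⟩, Finset.mem_univ _, ha _⟩ ⟨C, fun x hx y hy => ?_⟩
    simpa [Finset.sum_apply, hF] using hC ⟨x, hx⟩ ⟨y, hy⟩
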